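/- Let t ≥ 1 and let G be a connected graph on at least t vertices. Then there exists a labeling α : V(G) → {1, …, t} such that for all vertices x, z and every color c ∈ {1, …, t}, there is a sequence of distinct vertices x = y_0, y_1, …, y_ℓ = z with d_G(y_{i−1}, y_i) ≤ t for all i, α(y_i) = c for 1 ≤ i ≤ ℓ−1, and moreover d_G(x, y_1) ≤ t−1 if α(x) ≠ c, and d_G(y_{ℓ−1}, z) ≤ t−1 if α(z) ≠ c. -/

import Mathlib

def SimpleGraph.power {V : Type*} (G : SimpleGraph V) (n : ℕ) : SimpleGraph V where
  Adj v w := 1 ≤ G.dist v w ∧ G.dist v w ≤ n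
  symm := ⟨fun v w (h : 1 ≤ G.dist v w ∧ G.dist v w ≤ n) =>
    ⟨by rw [SimpleGraph.dist_comm]; exact h.1, by rw [SimpleGraph.dist_comm]; exact h.2⟩⟩
  loopless := ⟨fun v h => by simp [SimpleGraph.dist_self] at h⟩

/-- A graph is Hamilton-connected if every pair of distinct vertices is joined
by a Hamiltonian path. -/
def SimpleGraph.IsHamiltonConnected {V : Type*} [DecidableEq V] (G : SimpleGraph V) : Prop :=
  ∀ v w : V, v ≠ w → ∃ p : G.Walk v w, p.IsHamiltonian

/-- A graph is `k`-ordered if every sequence of `k` distinct vertices lies on a cycle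
in the given cyclic order. -/
def SimpleGraph.IsKOrdered {V : Type*} (G : SimpleGraph V) (k : ℕ) : Prop :=
  ∀ v : Fin k → V, Function.Injective v →
    ∃ (a : V) (c : G.Walk a a), c.IsCycle ∧
      ∃ t : Fin k → ℕ, StrictMono t ∧ (∀ i, t i < c.length) ∧ ∀ i, c.getVert (t i) = v i

/-- A graph is `k`-ordered Hamiltonian if every sequence of `k` distinct vertices lies on a
Hamiltonian cycle in the given cyclic order. -/
def SimpleGraph.IsKOrderedHamiltonian {V : Type*} [DecidableEq V] (G : SimpleGraph V) (k : ℕ) :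
    Prop :=
  ∀ v : Fin k → V, Function.Injective v →
    ∃ (a : V) (c : G.Walk a a), c.IsHamiltonianCycle ∧
      ∃ t : Fin k → ℕ, StrictMono t ∧ (∀ i, t i < c.length) ∧ ∀ i, c.getVert (t i) = v i

section AuxStmt9

open SimpleGraph

lemma aux_cross {W : Type*} {H : SimpleGraph W} {S : Set W} {a b : W} (wk : H.Walk a b) :
    a ∈ S → b ∉ S → ∃ u ∈ S, ∃ v, v ∉ S ∧ H.Adj u v := by
  classical
  induction wk with
  | nil => intro ha hb; exact absurd ha hb
  | @cons a c b h p ih =>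
    intro ha hb
    by_cases h2 : c ∈ S
    · exact ih h2 hb
    · exact ⟨a, ha, c, h2, h⟩

lemma aux_ball {W : Type*} [Fintype W] {H : SimpleGraph W} (hH : H.Connected) (w : W) :
    ∀ i : ℕ, min (Fintype.card W) (i + 1) ≤
      (Finset.univ.filter (fun v => H.dist w v ≤ i)).card := by
  intro i
  induction i with
  | zero =>
    have h1 : 1 ≤ (Finset.univ.filter (fun v => H.dist w v ≤ 0)).card := by
      refine Finset.card_pos.mpr ⟨w, ?_⟩
      simp [SimpleGraph.dist_self]
    exact le_trans (min_le_right _ _) h1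
  | succ i ih =>
    set B := Finset.univ.filter (fun v => H.dist w v ≤ i) with hB
    set B' := Finset.univ.filter (fun v => H.dist w v ≤ i + 1) with hB'
    have hsub : B ⊆ B' := by
      intro v hv
      simp only [hB, hB', Finset.mem_filter, Finset.mem_univ, true_and] at hv ⊢
      omega
    by_cases huniv : B = Finset.univ
    · have : Fintype.card W ≤ B'.card := by
        rw [← Finset.card_univ, ← huniv]; exact Finset.card_le_card hsub
      exact le_trans (min_le_left _ _) this
    · obtain ⟨b, hb⟩ : ∃ b, b ∉ B := by
        by_contra h; push_neg at h; exact huniv (Finset.eq_univ_of_forall h)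
      obtain ⟨u, hu, x, hx, hadj⟩ :=
        aux_cross (S := (↑B : Set W)) (hH.preconnected w b).some
          (by simp [hB, SimpleGraph.dist_self]) (by simpa using hb)
      have hdx : H.dist w x ≤ i + 1 := by
        have h1 : H.dist u x = 1 := SimpleGraph.dist_eq_one_iff_adj.mpr hadj
        have h2 : H.dist w u ≤ i := by
          have := hu
          simp only [hB, Finset.coe_filter, Set.mem_setOf_eq, Finset.mem_univ, true_and] at this
          exact this
        have := hH.dist_triangle (u := w) (v := u) (w := x)
        omega
      have hxB' : x ∈ B' := by simp [hB', hdx]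
      have hxB : x ∉ B := by simpa using hx
      have hlt : B.card < B'.card := by
        refine Finset.card_lt_card ⟨hsub, fun hc => hxB (hc hxB')⟩
      omega

lemma aux_order {W : Type*} [Fintype W] {H : SimpleGraph W} (hH : H.Connected) (w : W)
    {m : ℕ} (hm : Fintype.card W = m) :
    ∃ p : Fin m → W, Function.Bijective p ∧ (∀ i : Fin m, (i : ℕ) = 0 → p i = w) ∧
      ∀ i : Fin m, H.dist w (p i) ≤ (i : ℕ) := by
  subst hm
  set e : Fin (Fintype.card W) ≃ W := (Fintype.equivFin W).symm with he
  set f : Fin (Fintype.card W) → ℕ := fun i => H.dist w (e i) with hf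
  set σ := Tuple.sort f with hσ
  have mono : Monotone (f ∘ σ) := Tuple.monotone_sort f
  have key : ∀ i, f (σ i) ≤ (i : ℕ) := by
    intro i
    by_contra hcon
    push_neg at hcon
    set B := Finset.univ.filter (fun j => f j ≤ (i : ℕ)) with hBdef
    have hball : (i : ℕ) + 1 ≤ B.card := by
      have himg : B = (Finset.univ.filter (fun v => H.dist w v ≤ (i : ℕ))).image e.symm := by
        ext j
        simp only [hBdef, Finset.mem_filter, Finset.mem_univ, true_and, Finset.mem_image]
        constructor
        · intro h; exact ⟨e j, h, by simp⟩
        · rintro ⟨v, hv, rfl⟩; simpa [hf] using hv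
      rw [himg, Finset.card_image_of_injective _ e.symm.injective]
      have := aux_ball hH w (i : ℕ)
      have hi : (i : ℕ) < Fintype.card W := i.isLt
      omega
    have hlt : ∀ j ∈ B, (σ.symm j : Fin (Fintype.card W)) < i := by
      intro j hj
      by_contra hge
      push_neg at hge
      have h1 := mono hge
      simp only [Function.comp_apply, Equiv.apply_symm_apply] at h1
      simp only [hBdef, Finset.mem_filter, Finset.mem_univ, true_and] at hj
      omega
    have hcard : B.card ≤ (Finset.range (i : ℕ)).card := by
      refine Finset.card_le_card_of_injOn (fun j => ((σ.symm j : Fin (Fintype.card W)) : ℕ)) ?_ ?_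
      · intro j hj
        simp only [Finset.coe_range, Set.mem_Iio]
        exact hlt j hj
      · intro j1 _ j2 _ hEq
        exact σ.symm.injective (Fin.ext hEq)
    rw [Finset.card_range] at hcard
    omega
  refine ⟨fun i => e (σ i), ((σ.trans e).bijective), ?_, ?_⟩
  · intro i hi
    have h0 : f (σ i) = 0 := by
      have := key i
      omega
    have hreach : H.Reachable w (e (σ i)) := hH.preconnected w _
    have := SimpleGraph.Reachable.dist_eq_zero_iff hreach
    rw [hf] at h0
    simp only at h0
    exact (this.mp h0).symm
  · exact key

lemma aux_dist_le {V : Type*} {G : SimpleGraph V} {s : Set V}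
    (hc : (G.induce s).Connected) (a b : s) :
    G.dist (a : V) (b : V) ≤ (G.induce s).dist a b := by
  obtain ⟨p, hp⟩ := hc.exists_walk_length_eq_dist a b
  calc G.dist (a : V) (b : V)
      ≤ (p.map (SimpleGraph.Embedding.induce s).toHom).length := SimpleGraph.dist_le _
    _ = p.length := SimpleGraph.Walk.length_map _ _
    _ = (G.induce s).dist a b := hp

lemma aux_sub {V : Type*} [Fintype V] {G : SimpleGraph V} (hG : G.Connected) :
    ∀ k, 1 ≤ k → k ≤ Fintype.card V →
      ∃ s : Finset V, s.card = k ∧ (G.induce (↑s : Set V)).Connected := by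
  classical
  intro k
  induction k with
  | zero => omega
  | succ k ih =>
    intro h1 hle
    by_cases hk : k = 0
    · subst hk
      obtain ⟨v⟩ := hG.nonempty
      refine ⟨{v}, by simp, ?_⟩
      rw [Finset.coe_singleton, SimpleGraph.induce_singleton_eq_top]
      exact SimpleGraph.connected_top
    · obtain ⟨s, hcard, hconn⟩ := ih (by omega) (by omega)
      have hne : s ≠ Finset.univ := by
        intro h; rw [h, Finset.card_univ] at hcard; omega
      obtain ⟨b, hb⟩ : ∃ b, b ∉ s := by
        by_contra h; push_neg at h; exact hne (Finset.eq_univ_of_forall h)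
      obtain ⟨a, ha⟩ : s.Nonempty := Finset.card_pos.mp (by omega)
      obtain ⟨u, hu, x, hx, hadj⟩ :=
        aux_cross (S := (↑s : Set V)) (hG.preconnected a b).some (by simpa using ha)
          (by simpa using hb)
      have hu' : u ∈ s := by simpa using hu
      have hx' : x ∉ s := by simpa using hx
      refine ⟨insert x s, by rw [Finset.card_insert_of_notMem hx']; omega, ?_⟩
      have hset : (↑(insert x s) : Set V) = {u, x} ∪ (↑s : Set V) := by
        ext y
        simp only [Finset.coe_insert, Set.mem_insert_iff, Finset.mem_coe, Set.mem_union,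
          Set.mem_setOf_eq]
        constructor
        · rintro (rfl | h)
          · exact Or.inl (Or.inr rfl)
          · exact Or.inr h
        · rintro ((rfl | rfl) | h)
          · exact Or.inr hu'
          · exact Or.inl rfl
          · exact Or.inr h
      rw [hset]
      exact SimpleGraph.induce_union_connected
        (SimpleGraph.induce_pair_connected_of_adj hadj).preconnected hconn.preconnected ⟨u, Or.inl rfl, hu⟩

def auxRel {V : Type*} (G : SimpleGraph V) (t : ℕ) (α : V → Fin t) (c : Fin t)
    (S : Finset V) : V → V → Prop :=
  fun u v => u ∈ S ∧ v ∈ S ∧ α u = c ∧ α v = c ∧ G.dist u v ≤ t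

def auxInv {V : Type*} (G : SimpleGraph V) (t : ℕ) (S : Finset V) (α : V → Fin t) : Prop :=
  (∀ w ∈ S, ∃ p : Fin t → V, (∀ i : Fin t, (i : ℕ) = 0 → p i = w) ∧ (∀ i, p i ∈ S) ∧
      (Function.Injective fun i => α (p i)) ∧ ∀ i : Fin t, G.dist w (p i) ≤ (i : ℕ)) ∧
  (∀ w ∈ S, ∀ w' ∈ S, α w = α w' → Relation.ReflTransGen (auxRel G t α (α w) S) w w')

lemma aux_base {V : Type*} [Fintype V] {G : SimpleGraph V} {t : ℕ} (ht : 1 ≤ t)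
    (hcard : t ≤ Fintype.card V) (hG : G.Connected) :
    ∃ (S : Finset V) (α : V → Fin t), S.Nonempty ∧ auxInv G t S α := by
  classical
  obtain ⟨s, hcardS, hconn⟩ := aux_sub hG t ht hcard
  have hFt : Fintype.card (↑s : Set V) = t := by
    rw [← hcardS]
    exact Fintype.card_coe s
  set β : (↑s : Set V) ≃ Fin t := Fintype.equivFinOfCardEq hFt with hβ
  set α : V → Fin t := fun v => if h : v ∈ s then β ⟨v, by simpa using h⟩ else ⟨0, ht⟩ with hα
  have hαs : ∀ (v : V) (h : v ∈ s), α v = β ⟨v, by simpa using h⟩ := by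
    intro v h; simp [hα, h]
  refine ⟨s, α, Finset.card_pos.mp (by omega), ?_, ?_⟩
  · intro w hw
    obtain ⟨p', hbij, h0, hd⟩ := aux_order hconn (⟨w, by simpa using hw⟩ : (↑s : Set V)) hFt
    refine ⟨fun i => (p' i : V), ?_, ?_, ?_, ?_⟩
    · intro i hi
      simp only []
      rw [h0 i hi]
    · intro i
      simpa using (p' i).2
    · have : (fun i => α ((p' i : V))) = fun i => β (p' i) := by
        funext i
        rw [hαs _ (by simpa using (p' i).2)]
      rw [this]
      exact β.injective.comp hbij.injective
    · intro i
      exact le_trans (aux_dist_le hconn (⟨w, by simp [hw]⟩ : (↑s : Set V)) (p' i)) (hd i)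
  · intro w hw w' hw' heq
    rw [hαs w hw, hαs w' hw'] at heq
    have : w = w' := by
      have := β.injective heq
      exact congrArg Subtype.val this
    subst this
    exact Relation.ReflTransGen.refl

lemma aux_ext {V : Type*} [DecidableEq V] {G : SimpleGraph V} {t : ℕ} (ht : 1 ≤ t)
    (hG : G.Connected) {S : Finset V} {α : V → Fin t} (hInv : auxInv G t S α)
    {u v : V} (hu : u ∈ S) (hv : v ∉ S) (huv : G.Adj u v) :
    ∃ α' : V → Fin t, auxInv G t (insert v S) α' := by
  obtain ⟨p, hp0, hpS, hpinj, hpd⟩ := hInv.1 u hu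
  set lst : Fin t := ⟨t - 1, by omega⟩ with hlst
  set cs : Fin t := α (p lst) with hcs
  set α' : V → Fin t := Function.update α v cs with hα'
  have hagree : ∀ w ∈ S, α' w = α w := by
    intro w hw
    apply Function.update_of_ne
    intro h; subst h; exact hv hw
  have hdvu : G.dist v u ≤ 1 := le_of_eq (SimpleGraph.dist_eq_one_iff_adj.mpr huv.symm)
  have hdvp : G.dist v (p lst) ≤ t := by
    have h1 := hpd lst
    have h2 := hG.dist_triangle (u := v) (v := u) (w := p lst)
    have h3 : (lst : ℕ) = t - 1 := rfl
    omega
  have hαv : α' v = cs := by simp [hα']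
  have hαplst : α' (p lst) = cs := by rw [hagree _ (hpS lst), hcs]
  have hmono : ∀ (cc : Fin t) (a b : V), auxRel G t α cc S a b →
      auxRel G t α' cc (insert v S) a b := by
    rintro cc a b ⟨h1, h2, h3, h4, h5⟩
    exact ⟨Finset.mem_insert_of_mem h1, Finset.mem_insert_of_mem h2,
      (hagree a h1).trans h3, (hagree b h2).trans h4, h5⟩
  refine ⟨α', ?_, ?_⟩
  · intro w hw
    rcases Finset.mem_insert.mp hw with rfl | hwS
    · -- new vertex
      refine ⟨fun i => if h : (i : ℕ) = 0 then w else p ⟨(i : ℕ) - 1, by have := i.isLt; omega⟩,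
        ?_, ?_, ?_, ?_⟩
      · intro i hi; simp [hi]
      · intro i
        by_cases h : (i : ℕ) = 0
        · simp [h, Finset.mem_insert_self]
        · simp only [h, dif_neg, not_false_iff]
          exact Finset.mem_insert_of_mem (hpS _)
      · have heval : (fun i : Fin t => α' (if h : (i : ℕ) = 0 then w else p ⟨(i : ℕ) - 1, by have := i.isLt; omega⟩))
            = fun i : Fin t => α (p (if (i : ℕ) = 0 then lst else ⟨(i : ℕ) - 1, by have := i.isLt; omega⟩)) := by
          funext i
          by_cases h : (i : ℕ) = 0
          · simp [h, hαv, hcs]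
          · simp only [h, dif_neg, not_false_iff, if_neg]
            exact hagree _ (hpS _)
        rw [heval]
        have hg : Function.Injective
            (fun i : Fin t => if (i : ℕ) = 0 then lst else ⟨(i : ℕ) - 1, by have := i.isLt; omega⟩) := by
          intro i j hij
          by_cases hi : (i : ℕ) = 0 <;> by_cases hj : (j : ℕ) = 0
          · exact Fin.ext (hi.trans hj.symm)
          · simp only [hi, if_pos, hj, if_neg, not_false_iff, hlst] at hij
            have := congrArg Fin.val hij
            simp only at this
            have hjlt := j.isLt
            omega
          · simp only [hi, if_neg, not_false_iff, hj, if_pos, hlst] at hij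
            have := congrArg Fin.val hij
            simp only at this
            have hilt := i.isLt
            omega
          · simp only [hi, hj, if_neg, not_false_iff] at hij
            have := congrArg Fin.val hij
            simp only at this
            exact Fin.ext (by omega)
        exact hpinj.comp hg
      · intro i
        by_cases h : (i : ℕ) = 0
        · simp [h, SimpleGraph.dist_self]
        · simp only [h, dif_neg, not_false_iff]
          have h1 := hpd ⟨(i : ℕ) - 1, by have := i.isLt; omega⟩
          have h2 := hG.dist_triangle (u := w) (v := u) (w := p ⟨(i : ℕ) - 1, by have := i.isLt; omega⟩)
          simp only at h1
          omega
    · obtain ⟨q, hq0, hqS, hqinj, hqd⟩ := hInv.1 w hwS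
      refine ⟨q, hq0, fun i => Finset.mem_insert_of_mem (hqS i), ?_, hqd⟩
      have : (fun i => α' (q i)) = fun i => α (q i) := by
        funext i; exact hagree _ (hqS i)
      rw [this]; exact hqinj
  · intro w hw w' hw' heq
    rcases Finset.mem_insert.mp hw with hwv | hwS <;>
      rcases Finset.mem_insert.mp hw' with hw'v | hw'S
    · rw [hwv, hw'v]
    · rw [hwv]
      -- w = v, w' ∈ S
      have hcol : α w' = cs := by
        rw [← hagree _ hw'S, ← heq, hwv, hαv]
      have hchain := hInv.2 (p lst) (hpS lst) w' hw'S (by rw [← hcs, hcol])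
      rw [hαv]
      have h2 := Relation.ReflTransGen.mono (hmono _) _ _ hchain
      rw [← hcs] at h2
      exact Relation.ReflTransGen.head
        ⟨Finset.mem_insert_self _ _, Finset.mem_insert_of_mem (hpS lst), hαv, hαplst, hdvp⟩ h2
    · -- w ∈ S, w' = v
      rw [hw'v]
      have hcol : α w = cs := by
        rw [← hagree _ hwS, heq, hw'v, hαv]
      have hαw : α' w = cs := (hagree _ hwS).trans hcol
      rw [hαw]
      have hchain := hInv.2 w hwS (p lst) (hpS lst) (by rw [← hcs, hcol])
      have h2 := Relation.ReflTransGen.mono (hmono _) _ _ hchain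
      rw [hcol] at h2
      refine Relation.ReflTransGen.tail h2 ?_
      refine ⟨Finset.mem_insert_of_mem (hpS lst), Finset.mem_insert_self _ _, hαplst, hαv, ?_⟩
      rw [SimpleGraph.dist_comm]
      exact hdvp
    · -- both in S
      have heq' : α w = α w' := by
        rw [← hagree _ hwS, ← hagree _ hw'S, heq]
      have hchain := hInv.2 w hwS w' hw'S heq'
      have := Relation.ReflTransGen.mono (hmono _) _ _ hchain
      rwa [← hagree _ hwS] at this

lemma aux_grow {V : Type*} [Fintype V] [DecidableEq V] {G : SimpleGraph V} {t : ℕ}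
    (ht : 1 ≤ t) (hG : G.Connected) :
    ∀ (n : ℕ) (S : Finset V) (α : V → Fin t), (Finset.univ \ S).card ≤ n → S.Nonempty →
      auxInv G t S α → ∃ α', auxInv G t (Finset.univ : Finset V) α' := by
  intro n
  induction n with
  | zero =>
    intro S α hn _ hInv
    have : S = Finset.univ := by
      have h1 : Finset.univ \ S = ∅ := Finset.card_eq_zero.mp (by omega)
      have h2 : (Finset.univ : Finset V) ⊆ S := by
        intro x hx
        by_contra hxS
        have : x ∈ Finset.univ \ S := Finset.mem_sdiff.mpr ⟨hx, hxS⟩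
        rw [h1] at this
        exact absurd this (Finset.notMem_empty x)
      exact Finset.eq_univ_of_forall (fun x => h2 (Finset.mem_univ x))
    exact ⟨α, this ▸ hInv⟩
  | succ n ih =>
    intro S α hn hne hInv
    by_cases huniv : S = Finset.univ
    · exact ⟨α, huniv ▸ hInv⟩
    · obtain ⟨b, hb⟩ : ∃ b, b ∉ S := by
        by_contra h; push_neg at h; exact huniv (Finset.eq_univ_of_forall h)
      obtain ⟨a, ha⟩ := hne
      obtain ⟨x, hx, y, hy, hadj⟩ :=
        aux_cross (S := (↑S : Set V)) (hG.preconnected a b).some (by simpa using ha)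
          (by simpa using hb)
      have hx' : x ∈ S := by simpa using hx
      have hy' : y ∉ S := by simpa using hy
      obtain ⟨α', hInv'⟩ := aux_ext ht hG hInv hx' hy' hadj
      refine ih (insert y S) α' ?_ ⟨y, Finset.mem_insert_self _ _⟩ hInv'
      have hsub : Finset.univ \ insert y S ⊆ Finset.univ \ S := by
        intro z hz
        simp only [Finset.mem_sdiff, Finset.mem_insert] at hz ⊢
        tauto
      have hyl : y ∈ Finset.univ \ S := Finset.mem_sdiff.mpr ⟨Finset.mem_univ _, hy'⟩
      have hynot : y ∉ Finset.univ \ insert y S := by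
        simp [Finset.mem_sdiff]
      have : (Finset.univ \ insert y S).card < (Finset.univ \ S).card :=
        Finset.card_lt_card ⟨hsub, fun hc => hynot (hc hyl)⟩
      omega

lemma aux_assemble {V : Type*} (G : SimpleGraph V) (t : ℕ) (α : V → Fin t) (x z : V)
    (c : Fin t) (L : List V) (hne : L ≠ [])
    (hnd : L.Nodup) (hhead : L.head hne = x) (hlast : L.getLast hne = z)
    (hchain : L.Chain' (fun a b => G.dist a b ≤ t))
    (hcol : ∀ v ∈ L, v ≠ x → v ≠ z → α v = c)
    (hx : α x ≠ c → ∀ h : 2 ≤ L.length, G.dist x (L[1]'(by omega)) ≤ t - 1)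
    (hz : α z ≠ c → ∀ h : 2 ≤ L.length, G.dist (L[L.length - 2]'(by omega)) z ≤ t - 1) :
    ∃ (l : ℕ) (y : Fin (l + 1) → V), Function.Injective y ∧
      y 0 = x ∧ y (Fin.last l) = z ∧
      (∀ i : Fin l, G.dist (y i.castSucc) (y i.succ) ≤ t) ∧
      (∀ i : Fin (l + 1), i ≠ 0 → i ≠ Fin.last l → α (y i) = c) ∧
      (α x ≠ c → ∀ h : 0 < l, G.dist x (y ⟨1, by omega⟩) ≤ t - 1) ∧
      (α z ≠ c → ∀ h : 0 < l, G.dist (y ⟨l - 1, by omega⟩) z ≤ t - 1) := by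
  have hlen1 : 1 ≤ L.length := List.length_pos_iff.mpr hne
  have hinj : ∀ (m1 m2 : ℕ) (h1 : m1 < L.length) (h2 : m2 < L.length),
      L[m1]'h1 = L[m2]'h2 → m1 = m2 := by
    intro m1 m2 h1 h2 hEq
    have := List.nodup_iff_injective_get.mp hnd (a₁ := ⟨m1, h1⟩) (a₂ := ⟨m2, h2⟩)
      (by simpa using hEq)
    simpa using congrArg Fin.val this
  refine ⟨L.length - 1, fun i => L[(i : ℕ)]'(by have := i.isLt; omega), ?_, ?_, ?_, ?_, ?_, ?_, ?_⟩
  · intro i j hij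
    simp only at hij
    exact Fin.ext (hinj _ _ _ _ hij)
  · simp only [Fin.val_zero]
    rw [List.getElem_zero]
    exact hhead
  · simp only [Fin.val_last]
    rw [← hlast, List.getLast_eq_getElem]
  · intro i
    have hc := List.isChain_iff_getElem.mp hchain (i : ℕ) (by have := i.isLt; omega)
    simpa using hc
  · intro i hi0 hil
    have hmem : L[(i : ℕ)]'(by have := i.isLt; omega) ∈ L := List.getElem_mem _
    refine hcol _ hmem ?_ ?_
    · intro hix
      apply hi0
      have h0 : L[(0 : ℕ)]'(by omega) = x := by rw [List.getElem_zero]; exact hhead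
      have h2 := hinj _ _ _ _ (hix.trans h0.symm)
      exact Fin.ext (by simpa using h2)
    · intro hiz
      apply hil
      have h0 : L[L.length - 1]'(by omega) = z := by
        rw [← List.getLast_eq_getElem]; exact hlast
      have h2 := hinj _ _ _ _ (hiz.trans h0.symm)
      exact Fin.ext (by simp [Fin.val_last]; omega)
  · intro hαx hl
    exact hx hαx (by omega)
  · intro hαz hl
    have h2 : 2 ≤ L.length := by omega
    have h3 := hz hαz h2
    have h4 : L[L.length - 1 - 1]'(by omega) = L[L.length - 2]'(by omega) := by
      congr 1 <;> omega
    simp only []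
    rw [h4]
    exact h3

def auxH {V : Type*} (G : SimpleGraph V) (t : ℕ) (α : V → Fin t) (c : Fin t) :
    SimpleGraph V where
  Adj a b := a ≠ b ∧ α a = c ∧ α b = c ∧ G.dist a b ≤ t
  symm := by
    refine ⟨fun a b hab => ?_⟩
    exact ⟨hab.1.symm, hab.2.2.1, hab.2.1, by rw [SimpleGraph.dist_comm]; exact hab.2.2.2⟩
  loopless := ⟨fun a ha => ha.1 rfl⟩

lemma auxH_support_col {V : Type*} {G : SimpleGraph V} {t : ℕ} {α : V → Fin t} {c : Fin t}
    {a b : V} (p : (auxH G t α c).Walk a b) (h : α a = c) : ∀ v ∈ p.support, α v = c := by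
  induction p with
  | nil =>
    intro v hv
    rw [SimpleGraph.Walk.support_nil, List.mem_singleton] at hv
    rwa [hv]
  | @cons a e b hadj q ih =>
    intro v hv
    rw [SimpleGraph.Walk.support_cons] at hv
    rcases List.mem_cons.mp hv with rfl | hv2
    · exact h
    · exact ih (show a ≠ e ∧ α a = c ∧ α e = c ∧ G.dist a e ≤ t from hadj).2.2.1 v hv2

lemma aux_getElem_eq {β : Type*} (L : List β) (m1 m2 : ℕ) (h1 : m1 < L.length)
    (h2 : m2 < L.length) (he : m1 = m2) : L[m1]'h1 = L[m2]'h2 := by subst he; rfl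


end AuxStmt9

theorem stmt_9 {V : Type*} [Fintype V] (G : SimpleGraph V) (t : ℕ) (ht : 1 ≤ t)
    (hG : G.Connected) (hcard : t ≤ Fintype.card V) :
    ∃ α : V → Fin t, ∀ x z : V, ∀ c : Fin t,
      ∃ (l : ℕ) (y : Fin (l + 1) → V), Function.Injective y ∧
        y 0 = x ∧ y (Fin.last l) = z ∧
        (∀ i : Fin l, G.dist (y i.castSucc) (y i.succ) ≤ t) ∧
        (∀ i : Fin (l + 1), i ≠ 0 → i ≠ Fin.last l → α (y i) = c) ∧
        (α x ≠ c → ∀ h : 0 < l, G.dist x (y ⟨1, by omega⟩) ≤ t - 1) ∧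
        (α z ≠ c → ∀ h : 0 < l, G.dist (y ⟨l - 1, by omega⟩) z ≤ t - 1) := by
  classical
  obtain ⟨S0, α0, hS0ne, hInv0⟩ := aux_base ht hcard hG
  obtain ⟨α, hInv⟩ := aux_grow ht hG (Finset.univ \ S0).card S0 α0 le_rfl hS0ne hInv0
  refine ⟨α, ?_⟩
  intro x z c
  by_cases hxz : x = z
  · subst hxz
    refine ⟨0, fun _ => x, ?_, rfl, rfl, ?_, ?_, ?_, ?_⟩
    · intro i j _
      have h1 := i.isLt
      have h2 := j.isLt
      exact Fin.ext (by omega)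
    · exact fun i => i.elim0
    · intro i hi0 _
      have h1 := i.isLt
      exact absurd (Fin.ext (by omega) : i = 0) hi0
    · intro _ h; exact absurd h (by omega)
    · intro _ h; exact absurd h (by omega)
  · have hsel : ∀ w : V, ∃ s, α s = c ∧ (α w = c → s = w) ∧
        (α w ≠ c → G.dist w s ≤ t - 1) := by
      intro w
      by_cases h : α w = c
      · exact ⟨w, h, fun _ => rfl, fun h' => absurd h h'⟩
      · obtain ⟨p, hp0, _, hpinj, hpd⟩ := hInv.1 w (Finset.mem_univ w)
        obtain ⟨i, hi⟩ := Finite.injective_iff_surjective.mp hpinj c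
        simp only at hi
        have hine : (i : ℕ) ≠ 0 := by
          intro h0
          rw [hp0 i h0] at hi
          exact h hi
        refine ⟨p i, hi, fun h' => absurd h' h, fun _ => ?_⟩
        have h1 := hpd i
        have h2 := i.isLt
        omega
    obtain ⟨sx, hsxc, hsxe, hsxd⟩ := hsel x
    obtain ⟨sz, hszc, hsze, hszd⟩ := hsel z
    have hreach : (auxH G t α c).Reachable sx sz := by
      have key : ∀ b : V, Relation.ReflTransGen (auxRel G t α c Finset.univ) sx b →
          (auxH G t α c).Reachable sx b := by
        intro b hb
        induction hb with
        | refl => exact SimpleGraph.Reachable.refl _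
        | @tail b' d hbd hstep ih =>
          by_cases hbd2 : b' = d
          · rw [← hbd2]; exact ih
          · exact SimpleGraph.Reachable.trans ih
              (SimpleGraph.Adj.reachable (G := auxH G t α c) (show b' ≠ d ∧ α b' = c ∧ α d = c ∧ G.dist b' d ≤ t from ⟨hbd2, hstep.2.2.1, hstep.2.2.2.1, hstep.2.2.2.2⟩))
      have hc0 : α sx = α sz := hsxc.trans hszc.symm
      have hchain := hInv.2 sx (Finset.mem_univ _) sz (Finset.mem_univ _) hc0
      rw [hsxc] at hchain
      exact key sz hchain
    obtain ⟨wk0⟩ := hreach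
    set wk := wk0.bypass with hwk
    have hpath : wk.IsPath := SimpleGraph.Walk.bypass_isPath wk0
    have hnd : wk.support.Nodup := hpath.support_nodup
    have hnil : wk.support ≠ [] := SimpleGraph.Walk.support_ne_nil wk
    have hslen : 1 ≤ wk.support.length := List.length_pos_iff.mpr hnil
    have hheadL : wk.support.head hnil = sx := SimpleGraph.Walk.head_support wk
    have hlastL : wk.support.getLast hnil = sz := SimpleGraph.Walk.getLast_support wk
    have hchainL : wk.support.Chain' (fun a b => G.dist a b ≤ t) :=
      List.IsChain.imp (fun a b h => h.2.2.2) (SimpleGraph.Walk.isChain_adj_support wk)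
    have hcolL : ∀ v ∈ wk.support, α v = c := auxH_support_col wk hsxc
    have hget0 : ∀ (m : ℕ) (hm : m < wk.support.length), m = 0 →
        wk.support[m]'hm = sx := by
      intro m hm he
      subst he
      rw [List.getElem_zero]
      exact hheadL
    have hgetlast : ∀ (m : ℕ) (hm : m < wk.support.length), m = wk.support.length - 1 →
        wk.support[m]'hm = sz := by
      intro m hm he
      subst he
      rw [← List.getLast_eq_getElem]
      exact hlastL
    by_cases hax : α x = c <;> by_cases haz : α z = c
    · -- both colored c
      have hex : sx = x := hsxe hax
      have hez : sz = z := hsze haz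
      exact aux_assemble G t α x z c wk.support hnil hnd (by rw [hheadL, hex])
        (by rw [hlastL, hez]) hchainL (fun v hv _ _ => hcolL v hv)
        (fun h => absurd hax h) (fun h => absurd haz h)
    · -- x colored c, z not
      have hex : sx = x := hsxe hax
      have hdz : G.dist sz z ≤ t - 1 := by rw [SimpleGraph.dist_comm]; exact hszd haz
      have hznotin : z ∉ wk.support := fun hmem => haz (hcolL z hmem)
      refine aux_assemble G t α x z c (wk.support ++ [z]) (by simp) ?_ ?_ ?_ ?_ ?_ ?_ ?_
      · rw [List.nodup_append]
        exact ⟨hnd, List.nodup_singleton z, fun a ha b hb hab =>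
          hznotin ((hab.trans (List.mem_singleton.mp hb)) ▸ ha)⟩
      · rw [List.head_append_left hnil, hheadL, hex]
      · exact List.getLast_concat
      · unfold List.Chain'; rw [List.isChain_append]
        refine ⟨hchainL, List.isChain_singleton z, ?_⟩
        intro p hp q hq
        rw [List.getLast?_eq_getLast hnil, Option.mem_def, Option.some_inj] at hp
        simp only [List.head?_cons, Option.mem_def, Option.some_inj] at hq
        subst hp; subst hq
        rw [hlastL]
        exact le_trans hdz (Nat.sub_le t 1)
      · intro v hv hvx hvz
        rcases List.mem_append.mp hv with h1 | h1
        · exact hcolL v h1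
        · exact absurd (List.mem_singleton.mp h1) hvz
      · exact fun h => absurd hax h
      · intro _ hlen
        have h7 : ∀ (m : ℕ) (hm : m < (wk.support ++ [z]).length),
            m = wk.support.length - 1 → (wk.support ++ [z])[m]'hm = sz := by
          intro m hm he
          rw [List.getElem_append_left (by omega)]
          exact hgetlast _ _ he
        rw [h7 _ _ (by simp)]
        exact hdz
    · -- z colored c, x not
      have hez : sz = z := hsze haz
      have hdx : G.dist x sx ≤ t - 1 := hsxd hax
      have hxnotin : x ∉ wk.support := fun hmem => hax (hcolL x hmem)
      refine aux_assemble G t α x z c (x :: wk.support) (by simp) ?_ ?_ ?_ ?_ ?_ ?_ ?_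
      · exact List.nodup_cons.mpr ⟨hxnotin, hnd⟩
      · rfl
      · rw [List.getLast_cons hnil, hlastL, hez]
      · unfold List.Chain'; rw [List.isChain_cons]
        refine ⟨?_, hchainL⟩
        intro y hy
        rw [List.head?_eq_head hnil, Option.mem_def, Option.some_inj] at hy
        subst hy
        rw [hheadL]
        exact le_trans hdx (Nat.sub_le t 1)
      · intro v hv hvx hvz
        rcases List.mem_cons.mp hv with h1 | h1
        · exact absurd h1 hvx
        · exact hcolL v h1
      · intro _ hlen
        have h8 : (x :: wk.support)[1]'(by simp) = sx := by
          rw [List.getElem_cons_succ]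
          exact hget0 _ _ rfl
        rw [h8]
        exact hdx
      · exact fun h => absurd haz h
    · -- neither colored c
      have hdx : G.dist x sx ≤ t - 1 := hsxd hax
      have hdz : G.dist sz z ≤ t - 1 := by rw [SimpleGraph.dist_comm]; exact hszd haz
      have hxnotin : x ∉ wk.support := fun hmem => hax (hcolL x hmem)
      have hznotin : z ∉ wk.support := fun hmem => haz (hcolL z hmem)
      refine aux_assemble G t α x z c (x :: (wk.support ++ [z])) (by simp) ?_ ?_ ?_ ?_ ?_ ?_ ?_
      · refine List.nodup_cons.mpr ⟨?_, ?_⟩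
        · intro hmem
          rcases List.mem_append.mp hmem with h1 | h1
          · exact hxnotin h1
          · exact hxz (List.mem_singleton.mp h1)
        · rw [List.nodup_append]
          exact ⟨hnd, List.nodup_singleton z, fun a ha b hb hab =>
            hznotin ((hab.trans (List.mem_singleton.mp hb)) ▸ ha)⟩
      · rfl
      · rw [List.getLast_cons (by simp)]
        exact List.getLast_concat
      · unfold List.Chain'; rw [List.isChain_cons]
        constructor
        · intro y hy
          rw [List.head?_eq_head (by simp), List.head_append_left hnil,
            Option.mem_def, Option.some_inj] at hy
          subst hy
          rw [hheadL]
          exact le_trans hdx (Nat.sub_le t 1)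
        · rw [List.isChain_append]
          refine ⟨hchainL, List.isChain_singleton z, ?_⟩
          intro p hp q hq
          rw [List.getLast?_eq_getLast hnil, Option.mem_def, Option.some_inj] at hp
          simp only [List.head?_cons, Option.mem_def, Option.some_inj] at hq
          subst hp; subst hq
          rw [hlastL]
          exact le_trans hdz (Nat.sub_le t 1)
      · intro v hv hvx hvz
        rcases List.mem_cons.mp hv with h1 | h1
        · exact absurd h1 hvx
        · rcases List.mem_append.mp h1 with h2 | h2
          · exact hcolL v h2
          · exact absurd (List.mem_singleton.mp h2) hvz
      · intro _ hlen
        have h8 : (x :: (wk.support ++ [z]))[1]'(by simp) = sx := by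
          rw [List.getElem_cons_succ]
          rw [List.getElem_append_left (by omega)]
          exact hget0 _ _ rfl
        rw [h8]
        exact hdx
      · intro _ hlen
        have h7 : ∀ (m : ℕ) (hm : m < (x :: (wk.support ++ [z])).length),
            m = wk.support.length → (x :: (wk.support ++ [z]))[m]'hm = sz := by
          intro m hm he
          obtain ⟨k, hk⟩ : ∃ k, m = k + 1 := ⟨m - 1, by omega⟩
          subst hk
          rw [List.getElem_cons_succ]
          rw [List.getElem_append_left (by omega)]
          exact hgetlast _ _ (by omega)
        rw [h7 _ _ (by simp)]
        exact hdz
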